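/- Let A be a set with ternary operations p, j_1, ..., j_k (k ≥ 2) satisfying the directed Gumm identities (DG1)–(DG5). Let R, V, W, S_1, ..., S_ℓ be reflexive binary relations on A compatible with all the operations, with R symmetric, and let ⌈V˘∪W⌉ denote the smallest reflexive compatible relation containing V˘ ∪ W. Then R ∩ (V ∘ W) ∩ (S_1 ∘ S_2 ∘ ... ∘ S_ℓ) ⊆ (R ∩ ⌈V˘ ∪ W⌉) ∘ ((R ∩ S_1) ∘ (R ∩ S_2) ∘ ... ∘ (R ∩ S_ℓ))^{k-1}, where the superscript k−1 denotes (k−1)-fold composition of the bracketed relation with itself. -/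
import Mathlib


/-- Compatibility of a binary relation with a ternary operation. -/
def Compat3 {A : Type*} (t : A → A → A → A) (R : A → A → Prop) : Prop :=
  ∀ a₁ a₂ a₃ b₁ b₂ b₃ : A, R a₁ b₁ → R a₂ b₂ → R a₃ b₃ →
    R (t a₁ a₂ a₃) (t b₁ b₂ b₃)

/-- Relational composition. -/
def comp {A : Type*} (R S : A → A → Prop) : A → A → Prop :=
  fun a c => ∃ b, R a b ∧ S b c

/-- Converse of a relation. -/
def conv {A : Type*} (R : A → A → Prop) : A → A → Prop := fun a b => R b a

/-- Composition of a list of relations (`Eq` for the empty list). -/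
def compList {A : Type*} : List (A → A → Prop) → A → A → Prop
  | [] => Eq
  | R :: rs => comp R (compList rs)

/-- `compN Q n`: the `n`-fold composition `Q ∘ ... ∘ Q` (`n` factors);
`compN Q 0` is equality. -/
def compN {A : Type*} (Q : A → A → Prop) : ℕ → A → A → Prop
  | 0 => Eq
  | n + 1 => comp Q (compN Q n)

/-- Compatibility with all the directed Gumm operations `p, j_1, ..., j_k`. -/
def CompatAll {A : Type*} (k : ℕ) (p : A → A → A → A) (j : ℕ → A → A → A → A)
    (R : A → A → Prop) : Prop :=
  Compat3 p R ∧ ∀ i, 1 ≤ i → i ≤ k → Compat3 (j i) R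

/-- The smallest reflexive relation compatible with all the operations containing `U`. -/
def reflCompatClosure {A : Type*} (k : ℕ) (p : A → A → A → A)
    (j : ℕ → A → A → A → A) (U : A → A → Prop) : A → A → Prop :=
  fun a b => ∀ Q : A → A → Prop,
    Reflexive Q → CompatAll k p j Q → (∀ x y, U x y → Q x y) → Q a b

/-- Intro rule for `compList` of an `ofFn` list, from a chain. -/
lemma compList_ofFn_intro {A : Type*} :
    ∀ (n : ℕ) (f : Fin n → A → A → Prop) (g : ℕ → A),
      (∀ i : Fin n, f i (g i) (g (i + 1))) →
      compList (List.ofFn f) (g 0) (g n) := by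
  intro n
  induction n with
  | zero =>
    intro f g _
    simp [compList]
  | succ n ih =>
    intro f g h
    rw [List.ofFn_succ]
    refine ⟨g 1, ?_, ?_⟩
    · simpa using h 0
    · have := ih (fun i => f i.succ) (fun m => g (m + 1)) (fun i => by
        simpa using h i.succ)
      simpa using this

/-- Elimination rule for `compList` of an `ofFn` list, producing a chain. -/
lemma compList_ofFn_elim {A : Type*} :
    ∀ (n : ℕ) (f : Fin n → A → A → Prop) (a c : A),
      compList (List.ofFn f) a c →
      ∃ g : ℕ → A, g 0 = a ∧ g n = c ∧ ∀ i : Fin n, f i (g i) (g (i + 1)) := by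
  intro n
  induction n with
  | zero =>
    intro f a c h
    refine ⟨fun _ => a, rfl, ?_, fun i => i.elim0⟩
    exact h.symm ▸ rfl
  | succ n ih =>
    intro f a c h
    rw [List.ofFn_succ] at h
    obtain ⟨b, hab, hrest⟩ := h
    obtain ⟨g, hg0, hgn, hstep⟩ := ih (fun i => f i.succ) b c hrest
    refine ⟨fun m => match m with | 0 => a | (m + 1) => g m, rfl, hgn, ?_⟩
    rintro ⟨t, ht⟩
    cases t with
    | zero =>
      show f _ a (g 0)
      rw [hg0]
      have : (⟨0, ht⟩ : Fin (n + 1)) = 0 := rfl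
      rw [this]
      exact hab
    | succ t =>
      exact hstep ⟨t, Nat.lt_of_succ_lt_succ ht⟩

/-- Intro rule for `compN`, from a chain. -/
lemma compN_intro {A : Type*} (Q : A → A → Prop) :
    ∀ (n : ℕ) (g : ℕ → A), (∀ i, i < n → Q (g i) (g (i + 1))) →
      compN Q n (g 0) (g n) := by
  intro n
  induction n with
  | zero => intro g _; rfl
  | succ n ih =>
    intro g h
    exact ⟨g 1, h 0 (Nat.succ_pos n),
      ih (fun m => g (m + 1)) (fun i hi => h (i + 1) (by omega))⟩

theorem stmt_16 {A : Type*} (k : ℕ) (hk : 2 ≤ k)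
    (p : A → A → A → A) (j : ℕ → A → A → A → A)
    (DG1 : ∀ x z : A, p x z z = x)
    (DG2 : ∀ x z : A, p x x z = j 1 x x z)
    (DG3 : ∀ i, 1 ≤ i → i ≤ k → ∀ x y : A, j i x y x = x)
    (DG4 : ∀ i, 1 ≤ i → i < k → ∀ x z : A, j i x z z = j (i + 1) x x z)
    (DG5 : ∀ x y z : A, j k x y z = z)
    (ℓ : ℕ) (hℓ : 1 ≤ ℓ)
    (R V W : A → A → Prop) (S : Fin ℓ → A → A → Prop)
    (hRrefl : Reflexive R) (hRsymm : Symmetric R) (hRc : CompatAll k p j R)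
    (hVrefl : Reflexive V) (hVc : CompatAll k p j V)
    (hWrefl : Reflexive W) (hWc : CompatAll k p j W)
    (hSrefl : ∀ i, Reflexive (S i)) (hSc : ∀ i, CompatAll k p j (S i)) :
    ∀ a c : A,
      R a c → comp V W a c → compList (List.ofFn S) a c →
      comp
        (fun x y => R x y ∧
          reflCompatClosure k p j (fun u v => conv V u v ∨ W u v) x y)
        (compN (compList (List.ofFn fun i => fun x y => R x y ∧ S i x y)) (k - 1))
        a c := by
  intro a c hRac hVW hS
  obtain ⟨b, hVab, hWbc⟩ := hVW
  obtain ⟨s, hs0, hsl, hstep⟩ := compList_ofFn_elim ℓ S a c hS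
  refine ⟨j 1 a a c, ⟨?_, ?_⟩, ?_⟩
  · -- R a (j 1 a a c)
    have h1 : R (p a c c) (p a a c) :=
      hRc.1 a c c a a c (hRrefl a) (hRsymm hRac) (hRrefl c)
    rwa [DG1, DG2] at h1
  · -- closure part
    intro Q hQr hQc hQU
    have h1 : Q (p a b b) (p a a c) :=
      hQc.1 a b b a a c (hQr a) (hQU b a (Or.inl hVab)) (hQU b c (Or.inr hWbc))
    rwa [DG1, DG2] at h1
  · -- the chain of blocks
    have hRa : ∀ i, 1 ≤ i → i ≤ k → ∀ u, R (j i a u c) a := by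
      intro i h1 h2 u
      have h := hRc.2 i h1 h2 a u c a u a (hRrefl a) (hRrefl u) (hRsymm hRac)
      rwa [DG3 i h1 h2 a u] at h
    have hRcend : ∀ i, 1 ≤ i → i ≤ k → ∀ u, R (j i a u c) c := by
      intro i h1 h2 u
      have h := hRc.2 i h1 h2 a u c c u c hRac (hRrefl u) (hRrefl c)
      rwa [DG3 i h1 h2 c u] at h
    have hblock : ∀ i, 1 ≤ i → i < k →
        compList (List.ofFn fun t => fun x y => R x y ∧ S t x y)
          (j i a a c) (j (i + 1) a a c) := by
      intro i h1 h2
      have hik : i ≤ k := le_of_lt h2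
      have key := compList_ofFn_intro ℓ (fun t => fun x y => R x y ∧ S t x y)
          (fun t => j i a (s t) c) ?_
      · show compList _ (j i a a c) (j (i + 1) a a c)
        have e0 : j i a (s 0) c = j i a a c := by rw [hs0]
        have e1 : j i a (s ℓ) c = j (i + 1) a a c := by rw [hsl, DG4 i h1 h2 a c]
        rwa [e0, e1] at key
      · intro t
        constructor
        · -- R step
          have hu := hRc.2 i h1 hik (j i a (s t) c) (s ((t : ℕ) + 1)) (j i a (s t) c)
            a (s ((t : ℕ) + 1)) c
            (hRa i h1 hik (s t)) (hRrefl (s ((t : ℕ) + 1))) (hRcend i h1 hik (s t))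
          rwa [DG3 i h1 hik (j i a (s t) c) (s ((t : ℕ) + 1))] at hu
        · -- S step
          exact (hSc t).2 i h1 hik a (s t) c a (s ((t : ℕ) + 1)) c
            ((hSrefl t) a) (hstep t) ((hSrefl t) c)
    have hchain : ∀ n, ∀ i, 1 ≤ i → i + n = k →
        compN (compList (List.ofFn fun t => fun x y => R x y ∧ S t x y)) n
          (j i a a c) c := by
      intro n
      induction n with
      | zero =>
        intro i h1 h2
        have : i = k := by omega
        subst this
        exact DG5 a a c
      | succ n ih =>
        intro i h1 h2
        exact ⟨j (i + 1) a a c, hblock i h1 (by omega),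
          ih (i + 1) (by omega) (by omega)⟩
    exact hchain (k - 1) 1 le_rfl (by omega)
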